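/- arXiv:2107.07726 — 7 statements merged into one kernel-verified Lean document; each statement's English description precedes it below -/
import Mathlib

section
/- An orthogonality ⊥ on C is reciprocal if and only if it is focused, i.e., if and only if there exists a subset F of the hom-set C(I,J) such that for every object R, every u : I → R and every x : R → J, one has u ⊥_R x if and only if x ∘ u ∈ F. -/
open CategoryTheory MonoidalCategory

/-- An orthogonality is reciprocal if and only if it is focused. -/
theorem reciprocal_iff_focused
    {C : Type*} [Category C] [MonoidalCategory C] (J : C)
    (perp : ∀ R : C, (𝟙_ C ⟶ R) → (R ⟶ J) → Prop) :
    (∀ (R S : C) (u : 𝟙_ C ⟶ R) (x : S ⟶ J) (f : R ⟶ S),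
        perp R u (f ≫ x) ↔ perp S (u ≫ f) x) ↔
      ∃ F : Set (𝟙_ C ⟶ J), ∀ (R : C) (u : 𝟙_ C ⟶ R) (x : R ⟶ J),
        perp R u x ↔ u ≫ x ∈ F := by
  constructor
  · intro h
    refine ⟨{g | perp (𝟙_ C) (𝟙 _) g}, fun R u x => ?_⟩
    have := h (𝟙_ C) R (𝟙 _) x u
    simp only [Category.id_comp] at this
    exact this.symm
  · rintro ⟨F, hF⟩ R S u x f
    rw [hF, hF, Category.assoc]
end

section
/- Any reciprocal orthogonality on C stabilises the monoidal product: for all subsets U ⊆ C(I,R) and V ⊆ C(I,S), the three orthogonals coincide: (U°° ⊗ V°°)° = (U°° ⊗ V)° = (U ⊗ V°°)°. -/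
/-!
A point `(u ⊗ v) ∘ λ⁻¹` of `R ⊗ S` is `v` followed by the map `g : S ≅ I ⊗ S → R ⊗ S` induced
by `u` (and symmetrically `u` followed by a map induced by `v`). By reciprocity, for a copoint `x`
the set `{v | (v ≫ g) ⊥ x}` is the orthogonal `{g ≫ x}°`, hence closed under `(-)°°`; so replacing
either factor of a tensor by its biorthogonal does not change the orthogonal of the tensor.
-/

open CategoryTheory MonoidalCategory

/-- The orthogonal of a set of points `U ⊆ C(I,R)`: the copoints orthogonal to every member. -/
def ptOrth {C : Type*} [Category C] [MonoidalCategory C] {J : C}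
    (perp : ∀ R : C, (𝟙_ C ⟶ R) → (R ⟶ J) → Prop) (R : C)
    (U : Set (𝟙_ C ⟶ R)) : Set (R ⟶ J) :=
  {x | ∀ u ∈ U, perp R u x}

/-- The orthogonal of a set of copoints `V ⊆ C(R,J)`: the points orthogonal to every member. -/
def cpOrth {C : Type*} [Category C] [MonoidalCategory C] {J : C}
    (perp : ∀ R : C, (𝟙_ C ⟶ R) → (R ⟶ J) → Prop) (R : C)
    (V : Set (R ⟶ J)) : Set (𝟙_ C ⟶ R) :=
  {u | ∀ x ∈ V, perp R u x}

/-- Double orthogonal (closure) of a set of points. -/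
def ddOrth {C : Type*} [Category C] [MonoidalCategory C] {J : C}
    (perp : ∀ R : C, (𝟙_ C ⟶ R) → (R ⟶ J) → Prop) (R : C)
    (U : Set (𝟙_ C ⟶ R)) : Set (𝟙_ C ⟶ R) :=
  cpOrth perp R (ptOrth perp R U)

/-- The tensor of two sets of points: `U ⊗ V := { (u ⊗ v) ∘ λ_I⁻¹ | u ∈ U, v ∈ V }`. -/
def tensSet {C : Type*} [Category C] [MonoidalCategory C]
    {R S : C} (U : Set (𝟙_ C ⟶ R)) (V : Set (𝟙_ C ⟶ S)) :
    Set (𝟙_ C ⟶ R ⊗ S) :=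
  {w | ∃ u ∈ U, ∃ v ∈ V, w = (λ_ (𝟙_ C)).inv ≫ (u ⊗ₘ v)}

lemma tensSet_mono {C : Type*} [Category C] [MonoidalCategory C] {R S : C}
    {U U' : Set (𝟙_ C ⟶ R)} {V V' : Set (𝟙_ C ⟶ S)} (hU : U ⊆ U') (hV : V ⊆ V') :
    tensSet U V ⊆ tensSet U' V' := by
  rintro _ ⟨u, hu, v, hv, rfl⟩
  exact ⟨u, hU hu, v, hV hv, rfl⟩

lemma leftUnitor_inv_tensorHom_eq_comp_whiskerRight {C : Type*} [Category C]
    [MonoidalCategory C] {R S : C} (u : 𝟙_ C ⟶ R) (v : 𝟙_ C ⟶ S) :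
    (λ_ (𝟙_ C)).inv ≫ (u ⊗ₘ v) = v ≫ (λ_ S).inv ≫ u ▷ S := by
  rw [tensorHom_def', leftUnitor_inv_naturality_assoc]

lemma leftUnitor_inv_tensorHom_eq_comp_whiskerLeft {C : Type*} [Category C]
    [MonoidalCategory C] {R S : C} (u : 𝟙_ C ⟶ R) (v : 𝟙_ C ⟶ S) :
    (λ_ (𝟙_ C)).inv ≫ (u ⊗ₘ v) = u ≫ (ρ_ R).inv ≫ R ◁ v := by
  rw [MonoidalCategory.tensorHom_def, unitors_inv_equal, rightUnitor_inv_naturality_assoc]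

namespace Orthogonality

variable {C : Type*} [Category C] [MonoidalCategory C] {J : C}
  (perp : ∀ R : C, (𝟙_ C ⟶ R) → (R ⟶ J) → Prop)

def Reciprocal : Prop :=
  ∀ (R S : C) (u : 𝟙_ C ⟶ R) (x : S ⟶ J) (f : R ⟶ S), perp R u (f ≫ x) ↔ perp S (u ≫ f) x

variable {perp}

lemma subset_ddOrth (R : C) (U : Set (𝟙_ C ⟶ R)) : U ⊆ ddOrth perp R U :=
  fun _u hu _x hx => hx _ hu

lemma ptOrth_anti (R : C) {U U' : Set (𝟙_ C ⟶ R)} (h : U ⊆ U') :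
    ptOrth perp R U' ⊆ ptOrth perp R U :=
  fun _x hx u hu => hx u (h hu)

lemma perp_comp_of_mem_ddOrth (recip : Reciprocal perp) {S T : C} {V : Set (𝟙_ C ⟶ S)}
    {g : S ⟶ T} {x : T ⟶ J} (h : ∀ v ∈ V, perp T (v ≫ g) x) {v : 𝟙_ C ⟶ S}
    (hv : v ∈ ddOrth perp S V) : perp T (v ≫ g) x :=
  (recip _ _ _ _ _).1 (hv _ fun v' hv' => (recip _ _ _ _ _).2 (h v' hv'))

lemma ptOrth_tensSet_ddOrth_right (recip : Reciprocal perp) {R S : C} (U : Set (𝟙_ C ⟶ R))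
    (V : Set (𝟙_ C ⟶ S)) :
    ptOrth perp (R ⊗ S) (tensSet U (ddOrth perp S V)) = ptOrth perp (R ⊗ S) (tensSet U V) := by
  refine (ptOrth_anti _ (tensSet_mono subset_rfl (subset_ddOrth S V))).antisymm ?_
  rintro x hx _ ⟨u, hu, v, hv, rfl⟩
  rw [leftUnitor_inv_tensorHom_eq_comp_whiskerRight]
  refine perp_comp_of_mem_ddOrth recip (fun v' hv' => ?_) hv
  rw [← leftUnitor_inv_tensorHom_eq_comp_whiskerRight]
  exact hx _ ⟨u, hu, v', hv', rfl⟩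

lemma ptOrth_tensSet_ddOrth_left (recip : Reciprocal perp) {R S : C} (U : Set (𝟙_ C ⟶ R))
    (V : Set (𝟙_ C ⟶ S)) :
    ptOrth perp (R ⊗ S) (tensSet (ddOrth perp R U) V) = ptOrth perp (R ⊗ S) (tensSet U V) := by
  refine (ptOrth_anti _ (tensSet_mono (subset_ddOrth R U) subset_rfl)).antisymm ?_
  rintro x hx _ ⟨u, hu, v, hv, rfl⟩
  rw [leftUnitor_inv_tensorHom_eq_comp_whiskerLeft]
  refine perp_comp_of_mem_ddOrth recip (fun u' hu' => ?_) hu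
  rw [← leftUnitor_inv_tensorHom_eq_comp_whiskerLeft]
  exact hx _ ⟨u', hu', v, hv, rfl⟩

end Orthogonality

/-- any reciprocal orthogonality stabilises the monoidal product:
`(U°° ⊗ V°°)° = (U°° ⊗ V)° = (U ⊗ V°°)°`. -/
theorem reciprocal_orthogonality_stabilises_tensor
    {C : Type*} [Category C] [MonoidalCategory C] (J : C)
    (perp : ∀ R : C, (𝟙_ C ⟶ R) → (R ⟶ J) → Prop)
    (recip : ∀ (R S : C) (u : 𝟙_ C ⟶ R) (x : S ⟶ J) (f : R ⟶ S),
      perp R u (f ≫ x) ↔ perp S (u ≫ f) x)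
    (R S : C) (U : Set (𝟙_ C ⟶ R)) (V : Set (𝟙_ C ⟶ S)) :
    ptOrth perp (R ⊗ S) (tensSet (ddOrth perp R U) (ddOrth perp S V)) =
        ptOrth perp (R ⊗ S) (tensSet (ddOrth perp R U) V) ∧
      ptOrth perp (R ⊗ S) (tensSet (ddOrth perp R U) V) =
        ptOrth perp (R ⊗ S) (tensSet U (ddOrth perp S V)) := by
  refine ⟨Orthogonality.ptOrth_tensSet_ddOrth_right recip _ V, ?_⟩
  rw [Orthogonality.ptOrth_tensSet_ddOrth_left recip,
    Orthogonality.ptOrth_tensSet_ddOrth_right recip]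
end

section
/- Suppose in addition that C has binary products, with pairing ⟨u,v⟩ and projections p_l : A & B → A and p_r : A & B → B, and let ⊥ be a reciprocal orthogonality on C. If U ⊆ C(I,A) and V ⊆ C(I,B) satisfy U = U°° and V = V°°, then the set W := { ⟨u,v⟩ | u ∈ U, v ∈ V } ⊆ C(I, A & B) is closed under double orthogonality, W = W°°; indeed W equals the orthogonal ({ x ∘ p_l | x ∈ U° } ∪ { y ∘ p_r | y ∈ V° })°. -/
open CategoryTheory MonoidalCategory CategoryTheory.Limits

/-- in the presence of binary products, for a reciprocal orthogonality
the set of pairings `W = {⟨u,v⟩ | u ∈ U, v ∈ V}` of doubly closed sets `U`, `V`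
is doubly closed; indeed it is the orthogonal of `U°·p_l ∪ V°·p_r`. -/
theorem pairing_set_double_orthogonal_closed
    {C : Type*} [Category C] [MonoidalCategory C] [HasBinaryProducts C] (J : C)
    (perp : ∀ R : C, (𝟙_ C ⟶ R) → (R ⟶ J) → Prop)
    (recip : ∀ (R S : C) (u : 𝟙_ C ⟶ R) (x : S ⟶ J) (f : R ⟶ S),
      perp R u (f ≫ x) ↔ perp S (u ≫ f) x)
    (A B : C) (U : Set (𝟙_ C ⟶ A)) (V : Set (𝟙_ C ⟶ B))
    (hU : U = cpOrth perp A (ptOrth perp A U))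
    (hV : V = cpOrth perp B (ptOrth perp B V)) :
    {w : 𝟙_ C ⟶ A ⨯ B | ∃ u ∈ U, ∃ v ∈ V, w = prod.lift u v} =
        cpOrth perp (A ⨯ B) (ptOrth perp (A ⨯ B)
          {w : 𝟙_ C ⟶ A ⨯ B | ∃ u ∈ U, ∃ v ∈ V, w = prod.lift u v}) ∧
      {w : 𝟙_ C ⟶ A ⨯ B | ∃ u ∈ U, ∃ v ∈ V, w = prod.lift u v} =
        cpOrth perp (A ⨯ B)
          ((fun x => prod.fst ≫ x) '' (ptOrth perp A U) ∪
            (fun y => prod.snd ≫ y) '' (ptOrth perp B V)) := by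

  set W : Set (𝟙_ C ⟶ A ⨯ B) := {w | ∃ u ∈ U, ∃ v ∈ V, w = prod.lift u v} with hW
  set X : Set ((A ⨯ B : C) ⟶ J) :=
    ((fun x => prod.fst ≫ x) '' (ptOrth perp A U) ∪
      (fun y => prod.snd ≫ y) '' (ptOrth perp B V)) with hX
  -- W ⊆ W°°
  have h1 : W ⊆ cpOrth perp (A ⨯ B) (ptOrth perp (A ⨯ B) W) :=
    fun w hw x hx => hx w hw
  -- X ⊆ W°
  have h2 : X ⊆ ptOrth perp (A ⨯ B) W := by
    rintro z (⟨x, hx, rfl⟩ | ⟨y, hy, rfl⟩) <;> rintro w ⟨u, hu, v, hv, rfl⟩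
    · rw [recip, prod.lift_fst]; exact hx u hu
    · rw [recip, prod.lift_snd]; exact hy v hv
  -- hence W°° ⊆ X°
  have h3 : cpOrth perp (A ⨯ B) (ptOrth perp (A ⨯ B) W) ⊆ cpOrth perp (A ⨯ B) X :=
    fun w hw z hz => hw z (h2 hz)
  -- X° ⊆ W
  have h4 : cpOrth perp (A ⨯ B) X ⊆ W := by
    intro w hw
    have hfst : w ≫ prod.fst ∈ U := by
      rw [hU]
      intro x hx
      rw [← recip]
      exact hw _ (Or.inl ⟨x, hx, rfl⟩)
    have hsnd : w ≫ prod.snd ∈ V := by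
      rw [hV]
      intro y hy
      rw [← recip]
      exact hw _ (Or.inr ⟨y, hy, rfl⟩)
    exact ⟨_, hfst, _, hsnd, by rw [← prod.comp_lift, prod.lift_fst_snd, Category.comp_id]⟩
  have hWX : W = cpOrth perp (A ⨯ B) X :=
    le_antisymm (h1.trans h3) h4
  exact ⟨le_antisymm h1 (h3.trans h4), hWX⟩
end

section
/- Let (X_i)_{i∈ι} be a countable family of measurable spaces, let Σ_i X_i be their disjoint union equipped with the σ-algebra { ⋃_i {i}×A_i | A_i measurable in X_i }, and for each i let p_i : Kernel (Σ_j X_j) (X_i) be the projection kernel defined by p_i(⟨j,x⟩, A) = Dirac_x(A) if j = i and the zero measure otherwise. Then for every measurable space B and every family of transition kernels g_i from B to X_i, there exists a unique transition kernel m from B to Σ_i X_i such that p_i ∘ m = g_i for every i; it is given by m(b, ⋃_i {i}×A_i) = Σ_i g_i(b, A_i), i.e. m(b) is the sum over i of the pushforwards of g_i(b) along the inclusions x ↦ ⟨i,x⟩. Hence Σ_i X_i is a product, and therefore a countable biproduct, in the category of measurable spaces and transition kernels. -/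
open MeasureTheory ProbabilityTheory
open Set
open scoped ProbabilityTheory ENNReal

section Aux
variable {ι : Type*} {X : ι → Type*} [∀ i, MeasurableSpace (X i)]

lemma measurableSet_sigma_iff' {s : Set (Σ i, X i)} :
    MeasurableSet s ↔ ∀ i, MeasurableSet (Sigma.mk i ⁻¹' s) :=
  MeasurableSpace.measurableSet_iInf

lemma measurable_sigmaMk' (i : ι) : Measurable (Sigma.mk i : X i → Σ j, X j) := by
  intro s hs
  exact (measurableSet_sigma_iff'.1 hs) i

omit [∀ i, MeasurableSpace (X i)] in
lemma preimage_sigmaMk_image_ne {i j : ι} (hj : j ≠ i) (A : Set (X i)) :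
    (Sigma.mk j ⁻¹' (Sigma.mk i '' A)) = ∅ := by
  ext x
  simp only [mem_preimage, mem_image, mem_empty_iff_false, iff_false]
  rintro ⟨a, -, h⟩
  exact hj (congrArg Sigma.fst h.symm)

lemma measurableSet_image_sigmaMk {i : ι} {A : Set (X i)} (hA : MeasurableSet A) :
    MeasurableSet (Sigma.mk i '' A) := by
  rw [measurableSet_sigma_iff']
  intro j
  rcases eq_or_ne j i with rfl | hj
  · rw [preimage_image_eq _ sigma_mk_injective]; exact hA
  · rw [preimage_sigmaMk_image_ne hj]; exact MeasurableSet.empty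

end Aux



/-- the disjoint union of a countable family of measurable spaces, with the
projection kernels `p i (⟨j,x⟩, A) = δ_x(A)` if `j = i` and `0` otherwise, is a product
in the category of measurable spaces and transition kernels: for every family of kernels
`g i : Kernel B (X i)` there is a unique kernel `m : Kernel B (Σ i, X i)` with
`p i ∘ₖ m = g i` for all `i`, and any such `m` satisfies
`m b = Σ_i (g i b).map (Sigma.mk i)`. -/
theorem sigma_product_of_kernels
    {ι : Type*} [Countable ι] (X : ι → Type*) [∀ i, MeasurableSpace (X i)]
    (p : ∀ i, Kernel (Σ j, X j) (X i))
    (hp_eq : ∀ (i : ι) (x : X i), p i ⟨i, x⟩ = Measure.dirac x)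
    (hp_ne : ∀ (i j : ι) (x : X j), j ≠ i → p i ⟨j, x⟩ = 0)
    (B : Type*) [MeasurableSpace B] (g : ∀ i, Kernel B (X i)) :
    (∃! m : Kernel B (Σ i, X i), ∀ i, p i ∘ₖ m = g i) ∧
      ∀ m : Kernel B (Σ i, X i), (∀ i, p i ∘ₖ m = g i) →
        ∀ b, m b = Measure.sum fun i => (g i b).map (Sigma.mk i) := by
  classical
  -- the key computation: composing with `p i` recovers the measure of the image
  have key : ∀ (m : Kernel B (Σ i, X i)) (i : ι) (b : B) {A : Set (X i)},
      MeasurableSet A → (p i ∘ₖ m) b A = m b (Sigma.mk i '' A) := by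
    intro m i b A hA
    rw [Kernel.comp_apply' _ _ _ hA]
    have h1 : ∀ y : Σ j, X j,
        p i y A = (Sigma.mk i '' A).indicator (fun _ => (1 : ℝ≥0∞)) y := by
      rintro ⟨j, x⟩
      rcases eq_or_ne j i with rfl | hj
      · rw [hp_eq j x, Measure.dirac_apply' _ hA]
        by_cases hx : x ∈ A
        · simp [indicator_of_mem hx, indicator_of_mem (mem_image_of_mem _ hx)]
        · rw [indicator_of_notMem hx, indicator_of_notMem]
          intro hmem
          obtain ⟨a, ha, h⟩ := hmem
          obtain rfl : a = x := sigma_mk_injective h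
          exact hx ha
      · rw [hp_ne i j x hj]
        rw [indicator_of_notMem]
        · rfl
        · intro hmem
          have := preimage_sigmaMk_image_ne hj A
          have hx : x ∈ Sigma.mk j ⁻¹' (Sigma.mk i '' A) := hmem
          rw [this] at hx
          exact hx
    simp_rw [h1]
    rw [lintegral_indicator (measurableSet_image_sigmaMk hA)]
    simp
  -- the candidate kernel
  set m₀ : Kernel B (Σ i, X i) :=
    Kernel.sum fun i => Kernel.map (g i) (Sigma.mk i) with hm₀
  have hm₀_apply : ∀ b, m₀ b = Measure.sum fun i => (g i b).map (Sigma.mk i) := by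
    intro b
    rw [hm₀, Kernel.sum_apply]
    congr 1
    ext i : 1
    rw [Kernel.map_apply _ (measurable_sigmaMk' i)]
  -- any solution equals the sum formula
  have huniq : ∀ m : Kernel B (Σ i, X i), (∀ i, p i ∘ₖ m = g i) →
      ∀ b, m b = Measure.sum fun i => (g i b).map (Sigma.mk i) := by
    intro m hm b
    refine Measure.ext fun s hs => ?_
    rw [Measure.sum_apply _ hs]
    have h1 : ∀ i, (g i b).map (Sigma.mk i) s = m b (s ∩ range (Sigma.mk i)) := by
      intro i
      rw [Measure.map_apply (measurable_sigmaMk' i) hs, ← hm i,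
        key m i b ((measurable_sigmaMk' i) hs), image_preimage_eq_inter_range]
    simp_rw [h1]
    rw [← measure_iUnion]
    · congr 1
      rw [← inter_iUnion]
      have : (⋃ i, range (Sigma.mk i : X i → Σ j, X j)) = univ := by
        ext ⟨j, x⟩
        simp only [mem_iUnion, mem_range, mem_univ, iff_true]
        exact ⟨j, x, rfl⟩
      rw [this, inter_univ]
    · intro i j hij
      refine Disjoint.mono inter_subset_right inter_subset_right ?_
      rw [disjoint_iff_inter_eq_empty]
      ext ⟨k, x⟩
      simp only [mem_inter_iff, mem_range, mem_empty_iff_false, iff_false, not_and]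
      rintro ⟨a, ha⟩ ⟨c, hc⟩
      exact hij ((congrArg Sigma.fst ha).trans (congrArg Sigma.fst hc).symm)
    · intro i
      exact hs.inter (by simpa using measurableSet_image_sigmaMk (i := i) MeasurableSet.univ)
  -- m₀ satisfies the equations
  have hm₀_sol : ∀ i, p i ∘ₖ m₀ = g i := by
    intro i
    refine Kernel.ext fun b => Measure.ext fun A hA => ?_
    rw [key m₀ i b hA, hm₀_apply b,
      Measure.sum_apply _ (measurableSet_image_sigmaMk hA)]
    have h2 : ∀ j, (g j b).map (Sigma.mk j) (Sigma.mk i '' A)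
        = if j = i then g i b A else 0 := by
      intro j
      rw [Measure.map_apply (measurable_sigmaMk' j) (measurableSet_image_sigmaMk hA)]
      rcases eq_or_ne j i with rfl | hj
      · rw [if_pos rfl, preimage_image_eq _ sigma_mk_injective]
      · rw [if_neg hj, preimage_sigmaMk_image_ne hj, measure_empty]
    simp_rw [h2]
    rw [tsum_eq_single i fun j hj => if_neg hj, if_pos rfl]
  refine ⟨⟨m₀, hm₀_sol, fun m hm => ?_⟩, huniq⟩
  exact Kernel.ext fun b => by rw [huniq m hm b, ← hm₀_apply b]
end

section
/- Let X be a measurable space and n ∈ ℕ. For every measurable space W and every transition kernel τ from (Fin n → X) to W that equalises the n! symmetries, i.e. τ(x ∘ σ, ·) = τ(x, ·) for every permutation σ of Fin n and every x : Fin n → X, there exists a unique transition kernel τ' from X^{(n)} to W such that τ'(F(x), ·) = τ(x, ·) for all x (equivalently, τ equals the composition of τ' with the deterministic kernel of F). Hence X^{(n)}, with the deterministic kernel of F, is the equaliser of the n! symmetries of the n-fold tensor power of X in the opposite category of transition kernels. -/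
open MeasureTheory ProbabilityTheory
open scoped ProbabilityTheory

/-- The setoid on `Fin n → X` identifying tuples up to permutation of coordinates. -/
def symSetoid (X : Type*) (n : ℕ) : Setoid (Fin n → X) where
  r x y := ∃ σ : Equiv.Perm (Fin n), x ∘ σ = y
  iseqv := by
    refine ⟨fun x => ⟨1, ?_⟩, ?_, ?_⟩
    · funext i; simp
    · rintro x y ⟨σ, rfl⟩
      exact ⟨σ⁻¹, by funext i; simp⟩
    · rintro x y z ⟨σ, rfl⟩ ⟨τ, rfl⟩
      exact ⟨σ * τ, by funext i; simp [Equiv.Perm.mul_apply]⟩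

/-- The symmetric power `X^{(n)}`: the quotient of `Fin n → X` by permutations. -/
def SymPow (X : Type*) (n : ℕ) : Type _ := Quotient (symSetoid X n)

/-- `X^{(n)}` carries the σ-algebra pushed forward along the quotient map
`F : (Fin n → X) → X^{(n)}`. -/
instance SymPow.instMeasurableSpace (X : Type*) [MeasurableSpace X] (n : ℕ) :
    MeasurableSpace (SymPow X n) :=
  MeasurableSpace.map (Quotient.mk (symSetoid X n)) inferInstance

/-- every transition kernel `τ` out of `Fin n → X` equalising the `n!`
symmetries factors uniquely through the symmetric power `X^{(n)}`; hence `X^{(n)}`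
(with the deterministic kernel of the quotient map) is the equaliser of the `n!`
symmetries of the `n`-fold tensor power of `X` in the opposite category of
transition kernels. -/
theorem symPow_equaliser_of_kernels
    (X : Type*) [MeasurableSpace X] (n : ℕ)
    (W : Type*) [MeasurableSpace W]
    (τ : Kernel (Fin n → X) W)
    (hτ : ∀ (σ : Equiv.Perm (Fin n)) (x : Fin n → X), τ (x ∘ σ) = τ x) :
    ∃! τ' : Kernel (SymPow X n) W,
      ∀ x : Fin n → X, τ' (Quotient.mk (symSetoid X n) x) = τ x := by
  classical
  set f : SymPow X n → Measure W :=
    Quotient.lift (fun x => τ x) (by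
      rintro x y ⟨σ, rfl⟩
      exact (hτ σ x).symm) with hf
  have hmeas : Measurable f := by
    intro s hs
    exact τ.measurable hs
  refine ⟨⟨f, hmeas⟩, fun x => rfl, ?_⟩
  intro κ hκ
  refine Kernel.ext fun q => ?_
  induction q using Quotient.ind with
  | _ x => exact hκ x
end

section
/- Let X and Z be measurable spaces and n ∈ ℕ. For every measurable space W and every transition kernel τ from the product measurable space (Fin n → X) × Z to W satisfying τ((x ∘ σ, z), ·) = τ((x, z), ·) for every permutation σ of Fin n, every x : Fin n → X and every z ∈ Z, there exists a unique transition kernel τ' from X^{(n)} × Z to W such that τ'((F(x), z), ·) = τ((x, z), ·) for all x and z. That is, X^{(n)} × Z, with the deterministic kernel of F × id_Z, is the equaliser of the morphisms (n!-symmetries) ⊗ Z, so the monoidal product distributes over the equaliser in the opposite category of s-finite transition kernels. -/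
open MeasureTheory ProbabilityTheory
open scoped ProbabilityTheory

/-!
A measurable set `T` of `Y × Z` lies in the σ-algebra generated by countably many rectangles, so
it is the preimage of a measurable set of `ℝ × Z` under `f × id` for one measurable `f : Y → ℝ`
(countably many real functions are packed into one through a Borel embedding `(ℕ → ℝ) → ℝ`).
If `T` is invariant under a finite group acting on `Y`, replacing `f` by its minimum over orbits
gives an invariant such `f`, which descends to the quotient. Applied to `Fin n → X` with the
permutation action, this shows that a set of `X^{(n)} × Z` is measurable as soon as its preimage in
`(Fin n → X) × Z` is, and so the invariant kernel `τ` descends to a kernel on `X^{(n)} × Z`.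
-/

open MeasureTheory Set

theorem MeasurableSet.exists_real_prodMap_preimage {Y Z : Type*} [MeasurableSpace Y]
    [MeasurableSpace Z] {T : Set (Y × Z)} (hT : MeasurableSet T) :
    ∃ f : Y → ℝ, Measurable f ∧
      ∃ T' : Set (ℝ × Z), MeasurableSet T' ∧ T = Prod.map f id ⁻¹' T' := by
  rw [← generateFrom_prod] at hT
  induction T, hT using MeasurableSpace.generateFrom_induction with
  | hC _ hAB =>
    obtain ⟨A, hA, B, hB, rfl⟩ := hAB
    refine ⟨A.indicator 1, measurable_const.indicator hA, {1} ×ˢ B,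
      (measurableSet_singleton 1).prod hB, ?_⟩
    ext ⟨y, z⟩
    by_cases hy : y ∈ A <;> simp [hy]
  | empty => exact ⟨0, measurable_const, ∅, .empty, rfl⟩
  | compl _ _ ih =>
    obtain ⟨f, hf, T', hT', rfl⟩ := ih
    exact ⟨f, hf, T'ᶜ, hT'.compl, rfl⟩
  | iUnion _ _ ih =>
    choose f hf T' hT' hT using ih
    let e := embeddingReal (ℕ → ℝ)
    have he : MeasurableEmbedding e := measurableEmbedding_embeddingReal _
    let g : ℝ → ℕ → ℝ := Function.extend e id 0
    have hg : Measurable g := he.measurable_extend measurable_id measurable_const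
    refine ⟨fun y => e fun k => f k y, he.measurable.comp (measurable_pi_lambda _ hf),
      ⋃ k, Prod.map (fun r => g r k) id ⁻¹' T' k,
      .iUnion fun k => (((measurable_pi_apply k).comp hg).prodMap measurable_id) (hT' k), ?_⟩
    simp only [preimage_iUnion, hT]
    refine iUnion_congr fun k => ?_
    ext ⟨y, z⟩
    simp [g, he.injective.extend_apply]

instance DomMulAct.instFinite {M : Type*} [Finite M] : Finite Mᵈᵐᵃ :=
  .of_equiv M DomMulAct.mk

instance DomMulAct.instMeasurableConstSMulPi {M ι X : Type*} [SMul M ι] [MeasurableSpace X] :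
    MeasurableConstSMul Mᵈᵐᵃ (ι → X) where
  measurable_const_smul _ := measurable_pi_lambda _ fun _ => measurable_pi_apply _

theorem MeasurableSet.exists_invariant_real_prodMap_preimage {G Y Z : Type*} [Group G] [Finite G]
    [MulAction G Y] [MeasurableSpace Y] [MeasurableSpace Z] [MeasurableConstSMul G Y]
    {T : Set (Y × Z)} (hT : MeasurableSet T) (hinv : ∀ (g : G) y z, (g • y, z) ∈ T ↔ (y, z) ∈ T) :
    ∃ β : Y → ℝ, Measurable β ∧ (∀ (g : G) y, β (g • y) = β y) ∧
      ∃ T' : Set (ℝ × Z), MeasurableSet T' ∧ T = Prod.map β id ⁻¹' T' := by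
  obtain ⟨f, hf, T', hT', rfl⟩ := hT.exists_real_prodMap_preimage
  -- the minimum over the orbit is attained, so `(β y, z) ∈ T'` tests a point of the orbit of `y`
  refine ⟨fun y => ⨅ g : G, f (g • y), .iInf fun g => hf.comp (measurable_const_smul g),
    fun h y => ?_, T', hT', ?_⟩
  · simpa [mul_smul] using (Equiv.mulRight h).iInf_comp (g := fun g => f (g • y))
  · ext ⟨y, z⟩
    obtain ⟨g, hg⟩ := exists_eq_ciInf_of_finite (f := fun g : G => f (g • y))
    simpa [← hg] using (hinv g y z).symm

namespace SymPow

variable {X Z : Type*} {n : ℕ}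

theorem mk_comp_perm (x : Fin n → X) (σ : Equiv.Perm (Fin n)) :
    Quotient.mk (symSetoid X n) (x ∘ σ) = Quotient.mk (symSetoid X n) x :=
  (Quotient.sound (show (symSetoid X n).r x (x ∘ σ) from ⟨σ, rfl⟩)).symm

variable [MeasurableSpace X] [MeasurableSpace Z]

theorem measurableSet_of_measurableSet_prodMap_preimage {S : Set (SymPow X n × Z)}
    (hS : MeasurableSet (Prod.map (Quotient.mk (symSetoid X n)) id ⁻¹' S)) : MeasurableSet S := by
  obtain ⟨β, hβ, hβ_inv, T', hT', hST⟩ :=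
    hS.exists_invariant_real_prodMap_preimage (G := (Equiv.Perm (Fin n))ᵈᵐᵃ) fun g x z => by
      change (Quotient.mk _ (x ∘ (DomMulAct.mk.symm g : Equiv.Perm (Fin n))), z) ∈ S ↔
        (Quotient.mk _ x, z) ∈ S
      rw [mk_comp_perm]
  let β' : SymPow X n → ℝ :=
    Quotient.lift β <| by rintro x _ ⟨σ, rfl⟩; exact (hβ_inv (DomMulAct.mk σ) x).symm
  have hβ' : Measurable β' := fun _ hs => hβ hs
  have hS_eq : S = Prod.map β' id ⁻¹' T' := by
    ext ⟨q, z⟩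
    induction q using Quotient.ind with
    | _ x => exact Set.ext_iff.mp hST (x, z)
  exact hS_eq ▸ hβ'.prodMap measurable_id hT'

theorem measurable_of_measurable_comp_prodMap {E : Type*} [MeasurableSpace E]
    {f : SymPow X n × Z → E} (hf : Measurable (f ∘ Prod.map (Quotient.mk (symSetoid X n)) id)) :
    Measurable f :=
  fun _ hs => measurableSet_of_measurableSet_prodMap_preimage (hf hs)

end SymPow

/-- the monoidal product distributes over the symmetric-power equaliser:
every transition kernel `τ` out of `(Fin n → X) × Z` invariant under the `n!` symmetries
acting on the first component factors uniquely through `X^{(n)} × Z`; hence `X^{(n)} × Z`,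
with the deterministic kernel of `F × id_Z`, is the equaliser of the morphisms
(n!-symmetries) ⊗ Z in the opposite category of s-finite transition kernels. -/
theorem symPow_tensor_equaliser_of_kernels
    (X Z : Type*) [MeasurableSpace X] [MeasurableSpace Z] (n : ℕ)
    (W : Type*) [MeasurableSpace W]
    (τ : Kernel ((Fin n → X) × Z) W)
    (hτ : ∀ (σ : Equiv.Perm (Fin n)) (x : Fin n → X) (z : Z), τ (x ∘ σ, z) = τ (x, z)) :
    ∃! τ' : Kernel (SymPow X n × Z) W,
      ∀ (x : Fin n → X) (z : Z), τ' (Quotient.mk (symSetoid X n) x, z) = τ (x, z) := by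
  let τ' : SymPow X n × Z → Measure W := fun p =>
    Quotient.lift (fun x => τ (x, p.2)) (by rintro x _ ⟨σ, rfl⟩; exact (hτ σ x p.2).symm) p.1
  have hτ' : Measurable τ' := Measure.measurable_of_measurable_coe _ fun _ hs =>
    SymPow.measurable_of_measurable_comp_prodMap (τ.measurable_coe hs)
  refine ⟨⟨τ', hτ'⟩, fun x z => rfl, fun κ hκ => Kernel.ext fun ⟨q, z⟩ => ?_⟩
  induction q using Quotient.ind with
  | _ x => exact hκ x z
end

section
/- Let X be a measurable space, n ∈ ℕ, and F a set of measurable functions X → [0,∞]. Then the double polars coincide: { s_n(g) | g ∈ (F^{⊗n})°° }°° = { s_n(g) | g ∈ F^{⊗n} }°°, where all polars are taken on the product measurable space Fin n → X, the polar of a set of functions being the set of s-finite measures integrating every member to at most 1, and the polar of a set of measures the set of measurable functions integrating to at most 1 against every member. -/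
open MeasureTheory
open scoped ENNReal

/-- The polar of a set of `[0,∞]`-valued functions on `W`: the s-finite measures
integrating every member to at most `1`. -/
def funPolar {W : Type*} [MeasurableSpace W] (G : Set (W → ℝ≥0∞)) : Set (Measure W) :=
  {μ | SFinite μ ∧ ∀ g ∈ G, ∫⁻ w, g w ∂μ ≤ 1}

/-- The polar of a set of measures on `W`: the measurable `[0,∞]`-valued functions
integrating to at most `1` against every member. -/
def measPolar {W : Type*} [MeasurableSpace W] (M : Set (Measure W)) : Set (W → ℝ≥0∞) :=
  {f | Measurable f ∧ ∀ μ ∈ M, ∫⁻ w, f w ∂μ ≤ 1}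

/-- Double polar of a set of functions. -/
def biPolar {W : Type*} [MeasurableSpace W] (G : Set (W → ℝ≥0∞)) : Set (W → ℝ≥0∞) :=
  measPolar (funPolar G)

/-- `F^{⊗n} = { f₁ ⊗ ⋯ ⊗ fₙ | all fᵢ ∈ F }`, where
`(f₁ ⊗ ⋯ ⊗ fₙ)(x) = ∏ i, fᵢ (x i)` on `Fin n → X`. -/
def tensorPow {X : Type*} (F : Set (X → ℝ≥0∞)) (n : ℕ) : Set ((Fin n → X) → ℝ≥0∞) :=
  {g | ∃ f : Fin n → X → ℝ≥0∞, (∀ i, f i ∈ F) ∧ g = fun x => ∏ i, f i (x i)}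

/-- The barycentre `s_n(g)(x) = (n!)⁻¹ Σ_{σ ∈ Perm (Fin n)} g (x ∘ σ)`. -/
noncomputable def bary {X : Type*} (n : ℕ) (g : (Fin n → X) → ℝ≥0∞) :
    (Fin n → X) → ℝ≥0∞ :=
  fun x => (n.factorial : ℝ≥0∞)⁻¹ * ∑ σ : Equiv.Perm (Fin n), g (x ∘ σ)

/-!
Integrating the barycentre `s_n(h)` against `μ` is integrating `h` against the symmetrization
`(n!)⁻¹ Σ_σ σ_* μ` of `μ`. So if `μ ∈ (s_n G)°`, its symmetrization lies in `G°` and therefore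
integrates every `h ∈ G°°` to at most `1`, i.e. `μ ∈ (s_n G°°)°`. Hence `s_n G` and `s_n G°°` already
have the same polar, for any set `G` of measurable functions, in particular for `G = F^{⊗n}`.
-/

section Polar

variable {W : Type*} [MeasurableSpace W]

lemma funPolar_anti {G H : Set (W → ℝ≥0∞)} (hGH : G ⊆ H) : funPolar H ⊆ funPolar G :=
  fun _ hμ => ⟨hμ.1, fun g hg => hμ.2 g (hGH hg)⟩

lemma subset_biPolar {G : Set (W → ℝ≥0∞)} (hG : ∀ g ∈ G, Measurable g) : G ⊆ biPolar G :=
  fun g hg => ⟨hG g hg, fun _ hμ => hμ.2 g hg⟩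

end Polar

section Symmetrize

variable {X : Type*} [MeasurableSpace X] {n : ℕ}

noncomputable def symmetrize (n : ℕ) (μ : Measure (Fin n → X)) : Measure (Fin n → X) :=
  (n.factorial : ℝ≥0∞)⁻¹ • Measure.sum fun σ : Equiv.Perm (Fin n) => μ.map (· ∘ σ)

instance (μ : Measure (Fin n → X)) [SFinite μ] : SFinite (symmetrize n μ) := by
  unfold symmetrize
  infer_instance

lemma lintegral_bary (μ : Measure (Fin n → X)) {h : (Fin n → X) → ℝ≥0∞} (hh : Measurable h) :
    ∫⁻ x, bary n h x ∂μ = ∫⁻ y, h y ∂symmetrize n μ := by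
  have hσ (σ : Equiv.Perm (Fin n)) : Measurable fun x : Fin n → X => x ∘ σ := by fun_prop
  simp only [bary, symmetrize]
  rw [lintegral_smul_measure, lintegral_sum_measure, tsum_fintype,
    lintegral_const_mul' _ _ (ENNReal.inv_ne_top.2 (mod_cast n.factorial_ne_zero)),
    lintegral_finsetSum (f := fun (σ : Equiv.Perm (Fin n)) x => h (x ∘ σ)) _
      fun σ _ => hh.comp (hσ σ)]
  simp only [lintegral_map hh (hσ _), smul_eq_mul]

lemma symmetrize_mem_funPolar {G : Set ((Fin n → X) → ℝ≥0∞)} (hG : ∀ g ∈ G, Measurable g)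
    {μ : Measure (Fin n → X)} (hμ : μ ∈ funPolar (bary n '' G)) :
    symmetrize n μ ∈ funPolar G := by
  have := hμ.1
  refine ⟨inferInstance, fun g hg => ?_⟩
  rw [← lintegral_bary μ (hG g hg)]
  exact hμ.2 _ ⟨g, hg, rfl⟩

lemma funPolar_bary_image_biPolar {G : Set ((Fin n → X) → ℝ≥0∞)}
    (hG : ∀ g ∈ G, Measurable g) :
    funPolar (bary n '' biPolar G) = funPolar (bary n '' G) := by
  refine Set.Subset.antisymm (funPolar_anti (Set.image_mono (subset_biPolar hG))) fun μ hμ => ?_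
  refine ⟨hμ.1, ?_⟩
  rintro _ ⟨h, ⟨hh, hle⟩, rfl⟩
  rw [lintegral_bary μ hh]
  exact hle _ (symmetrize_mem_funPolar hG hμ)

end Symmetrize

lemma measurable_of_mem_tensorPow {X : Type*} [MeasurableSpace X] {n : ℕ}
    {F : Set (X → ℝ≥0∞)} (hF : ∀ f ∈ F, Measurable f) {g : (Fin n → X) → ℝ≥0∞}
    (hg : g ∈ tensorPow F n) : Measurable g := by
  obtain ⟨f, hf, rfl⟩ := hg
  exact Finset.measurable_prod _ fun i _ => (hF _ (hf i)).comp (measurable_pi_apply i)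

/-- `{ s_n(g) | g ∈ (F^{⊗n})°° }°° = { s_n(g) | g ∈ F^{⊗n} }°°` on the
product measurable space `Fin n → X`. -/
theorem biPolar_bary_image_biPolar_tensorPow
    {X : Type*} [MeasurableSpace X] (n : ℕ) (F : Set (X → ℝ≥0∞))
    (hF : ∀ f ∈ F, Measurable f) :
    biPolar (bary n '' biPolar (tensorPow F n)) = biPolar (bary n '' tensorPow F n) :=
  congrArg measPolar (funPolar_bary_image_biPolar fun _ hg => measurable_of_mem_tensorPow hF hg)
end
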